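/- With \lambda_n(s) defined by w(t)^s = \sum_{n\ge 0} \lambda_n(s) F(t)^n as above, for any complex a \ne 0 and b with a+b arbitrary: a \cdot n \cdot \lambda_n(a+b) = (a+b) \sum_{k=0}^n k \lambda_k(a) \lambda_{n-k}(b) for all n \ge 0. -/

import Mathlib

open PowerSeries Finset
noncomputable section

/-- Coefficient-wise composition `f ∘ g` of formal power series; this agrees with the
usual composition when `g` has zero constant term. -/
def scomp (f g : PowerSeries ℂ) : PowerSeries ℂ :=
  PowerSeries.mk fun N => ∑ n ∈ Finset.range (N + 1),
    (PowerSeries.coeff n f) * (PowerSeries.coeff N (g ^ n))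

/-- The exponential series `∑ t^n/n!`. -/
def expS : PowerSeries ℂ := PowerSeries.mk fun n => 1 / (n.factorial : ℂ)

/-- The series `log(1+t) = ∑_{n≥1} (-1)^{n+1} t^n / n`. -/
def logS : PowerSeries ℂ := PowerSeries.mk fun n => if n = 0 then 0 else (-1) ^ (n + 1) / (n : ℂ)

/-- Complex power `φ^q := exp (q · log φ)`, well defined when `φ` has constant term 1. -/
def cpow (φ : PowerSeries ℂ) (q : ℂ) : PowerSeries ℂ :=
  scomp expS (q • scomp logS (φ - 1))

/-- Formal derivative. -/
def D (f : PowerSeries ℂ) : PowerSeries ℂ :=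
  PowerSeries.mk fun n => ((n + 1 : ℕ) : ℂ) * PowerSeries.coeff (n + 1) f

/-- Generalized binomial coefficient `binom(t, k) = t(t-1)⋯(t-k+1)/k!`. -/
def gbinom (t : ℂ) (k : ℕ) : ℂ := (∏ j ∈ Finset.range k, (t - j)) / (k.factorial : ℂ)

/-- The ordinary Bell polynomial `B_{n,k}(x_1, …, x_{n-k+1})`. -/
def ordBell (n k : ℕ) (x : ℕ → ℂ) : ℂ :=
  ∑ i : Fin (n - k + 1) → Fin (n + 1),
    if (∑ j, (i j : ℕ)) = k ∧ (∑ j, (j.1 + 1) * (i j : ℕ)) = n then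
      ((k.factorial : ℂ) / ∏ j, ((i j : ℕ).factorial : ℂ)) * ∏ j, x (j.1 + 1) ^ (i j : ℕ)
    else 0

/-! Writing `L = log w`, the definition gives `w^s = exp (s L)`, so `w^(a+b) = w^a w^b` and
`(w^s)' = s L' w^s`; together these give `a (w^(a+b))' = (a+b) (w^a)' w^b`. Since
`w^s = Λ_s ∘ F` for `Λ_s = ∑ λ_n(s) t^n`, and composition with `F` is injective and turns
`Λ'` into `(Λ' ∘ F) F'` with `F' ≠ 0`, the same identity holds for the `Λ_s`; its `n`-th
coefficient after multiplying by `t` is the claim. -/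

namespace PowerSeries

variable {R : Type*} [CommRing R]

lemma coeff_pow_eq_zero_of_lt {g : R⟦X⟧} (hg : constantCoeff g = 0) {n N : ℕ} (h : N < n) :
    coeff N (g ^ n) = 0 :=
  coeff_of_lt_order N <| (Nat.cast_lt.mpr h).trans_le (le_order_pow_of_constantCoeff_eq_zero n hg)

lemma coeff_X_mul_derivative (f : R⟦X⟧) (n : ℕ) :
    coeff n (X * d⁄dX R f) = n * coeff n f := by
  cases n with
  | zero => simp
  | succ n => rw [coeff_succ_X_mul, coeff_derivative, Nat.cast_succ, mul_comm]

lemma coeff_X_mul_derivative_mul (f g : R⟦X⟧) (n : ℕ) :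
    coeff n (X * d⁄dX R f * g) = ∑ k ∈ range (n + 1), k * coeff k f * coeff (n - k) g := by
  rw [coeff_mul, Nat.sum_antidiagonal_eq_sum_range_succ_mk]
  simp only [coeff_X_mul_derivative]

lemma subst_injective_of_isUnit_coeff_one {F : R⟦X⟧} (hF0 : constantCoeff F = 0)
    (hF1 : IsUnit (coeff 1 F)) : Function.Injective (subst (R := R) F) := by
  refine Function.LeftInverse.injective (g := subst (F.substInvOfIsUnit hF1)) fun f => ?_
  rw [subst_comp_subst_apply (.of_constantCoeff_zero' hF0) (.substInvOfIsUnit F hF1),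
    subst_substInvOfIsUnit_right F hF0 hF1, X_subst]

end PowerSeries

lemma scomp_eq_subst {g : ℂ⟦X⟧} (hg : constantCoeff g = 0) (f : ℂ⟦X⟧) :
    scomp f g = f.subst g := by
  ext N
  rw [scomp, coeff_mk, coeff_subst' (.of_constantCoeff_zero' hg),
    finsum_eq_sum_of_support_subset (s := range (N + 1))]
  · simp only [smul_eq_mul]
  · intro n hn
    rw [Function.mem_support, smul_eq_mul] at hn
    by_contra h
    simp only [coe_range, Set.mem_Iio, not_lt] at h
    exact hn (by rw [coeff_pow_eq_zero_of_lt hg (by omega), mul_zero])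

lemma expS_eq_exp : expS = exp ℂ := by
  ext n
  simp [expS, coeff_exp]

lemma constantCoeff_scomp_logS (g : ℂ⟦X⟧) : constantCoeff (scomp logS g) = 0 := by
  rw [← coeff_zero_eq_constantCoeff_apply, scomp, coeff_mk]
  simp [logS]

lemma hasSubst_scomp_logS (g : ℂ⟦X⟧) : HasSubst (scomp logS g) :=
  .of_constantCoeff_zero' (constantCoeff_scomp_logS g)

lemma cpow_eq_subst (w : ℂ⟦X⟧) (s : ℂ) :
    cpow w s = (exp ℂ).subst (s • scomp logS (w - 1)) := by
  rw [cpow, expS_eq_exp,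
    scomp_eq_subst (by rw [constantCoeff_smul, constantCoeff_scomp_logS, smul_zero])]

lemma cpow_eq_subst_rescale (w : ℂ⟦X⟧) (s : ℂ) :
    cpow w s = (rescale s (exp ℂ)).subst (scomp logS (w - 1)) := by
  have hL := hasSubst_scomp_logS (w - 1)
  rw [cpow_eq_subst, rescale_eq_subst, subst_comp_subst_apply (.smul_X' s) hL, subst_smul hL,
    subst_X hL]

lemma cpow_add (w : ℂ⟦X⟧) (s t : ℂ) : cpow w (s + t) = cpow w s * cpow w t := by
  rw [cpow_eq_subst_rescale, cpow_eq_subst_rescale, cpow_eq_subst_rescale,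
    ← subst_mul (hasSubst_scomp_logS _), exp_mul_exp_eq_exp_add]

lemma derivative_cpow (w : ℂ⟦X⟧) (s : ℂ) :
    d⁄dX ℂ (cpow w s) = s • (d⁄dX ℂ (scomp logS (w - 1)) * cpow w s) := by
  rw [cpow_eq_subst, derivative_subst ((hasSubst_scomp_logS _).smul' s), derivative_exp,
    Derivation.map_smul, mul_smul_comm, mul_comm]

lemma smul_derivative_cpow_add (w : ℂ⟦X⟧) (a b : ℂ) :
    a • d⁄dX ℂ (cpow w (a + b)) = (a + b) • (d⁄dX ℂ (cpow w a) * cpow w b) := by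
  rw [derivative_cpow, derivative_cpow, cpow_add, smul_smul, smul_mul_assoc, smul_smul,
    mul_comm a, mul_assoc]

lemma smul_derivative_add_of_subst_eq_cpow {F w : ℂ⟦X⟧} (hF0 : constantCoeff F = 0)
    (hF1 : coeff 1 F ≠ 0) {Λ : ℂ → ℂ⟦X⟧} (hΛ : ∀ s, cpow w s = (Λ s).subst F)
    (a b : ℂ) :
    a • d⁄dX ℂ (Λ (a + b)) = (a + b) • (d⁄dX ℂ (Λ a) * Λ b) := by
  have hF : HasSubst F := .of_constantCoeff_zero' hF0
  have hDF : d⁄dX ℂ F ≠ 0 := fun h => hF1 <| by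
    simpa [coeff_derivative] using congrArg (coeff 0) h
  apply subst_injective_of_isUnit_coeff_one hF0 hF1.isUnit
  apply mul_right_cancel₀ hDF
  rw [subst_smul hF, subst_smul hF, subst_mul hF, smul_mul_assoc, smul_mul_assoc,
    ← derivative_subst hF, mul_right_comm, ← derivative_subst hF, ← hΛ, ← hΛ, ← hΛ]
  exact smul_derivative_cpow_add w a b

theorem stmt6_general (F w : PowerSeries ℂ)
    (hF0 : PowerSeries.constantCoeff F = 0) (hF1 : PowerSeries.coeff 1 F ≠ 0)
    (lam : ℕ → ℂ → ℂ)
    (hlam : ∀ (s : ℂ) (N : ℕ), PowerSeries.coeff N (cpow w s) =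
      ∑ n ∈ Finset.range (N + 1), lam n s * PowerSeries.coeff N (F ^ n))
    (a b : ℂ) (n : ℕ) :
    a * (n : ℂ) * lam n (a + b) =
      (a + b) * ∑ k ∈ Finset.range (n + 1), (k : ℂ) * lam k a * lam (n - k) b := by
  set Λ : ℂ → ℂ⟦X⟧ := fun s => mk fun k => lam k s
  have hΛ (s : ℂ) : cpow w s = (Λ s).subst F := by
    ext N
    rw [hlam, ← scomp_eq_subst hF0, scomp, coeff_mk]
    simp [Λ]
  have hn := congrArg (coeff n) <|
    congrArg (X * ·) (smul_derivative_add_of_subst_eq_cpow hF0 hF1 hΛ a b)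
  rw [mul_smul_comm, mul_smul_comm, ← mul_assoc, coeff_smul, coeff_smul, coeff_X_mul_derivative,
    coeff_X_mul_derivative_mul] at hn
  simpa [Λ, mul_assoc] using hn

/-- `a n λ_n(a+b) = (a+b) ∑_{k=0}^n k λ_k(a) λ_{n-k}(b)` for the coefficients `λ_n(s)`
defined by `w(t)^s = ∑_{n≥0} λ_n(s) F(t)^n`. -/
theorem stmt6 (F w : PowerSeries ℂ)
    (hF0 : PowerSeries.constantCoeff F = 0) (hF1 : PowerSeries.coeff 1 F ≠ 0)
    (hw : PowerSeries.constantCoeff w = 1)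
    (lam : ℕ → ℂ → ℂ) (hlam0 : ∀ s : ℂ, lam 0 s = 1)
    (hlam : ∀ (s : ℂ) (N : ℕ), PowerSeries.coeff N (cpow w s) =
      ∑ n ∈ Finset.range (N + 1), lam n s * PowerSeries.coeff N (F ^ n))
    (a b : ℂ) (ha : a ≠ 0) (n : ℕ) :
    a * (n : ℂ) * lam n (a + b) =
      (a + b) * ∑ k ∈ Finset.range (n + 1), (k : ℂ) * lam k a * lam (n - k) b :=
  stmt6_general F w hF0 hF1 lam hlam a b n
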